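/- arXiv:2502.00248 — 4 statements merged into one kernel-verified Lean document; each statement's English description precedes it below -/
import Mathlib

section
/- Let x, x̄ ∈ ℝⁿ, u ∈ ℝᵖ, f : ℝⁿ → ℝⁿ, g : ℝⁿ → ℝ^{n×p}, A ∈ ℝ^{n×n}, δ ≥ 0 and θ > 0, and set x⁺ := f(x) + g(x)u. Let P₁, P₂ ∈ ℝ^{n×n} be symmetric positive definite. Assume: (i) ‖f(x) − A x‖ ≤ δ; (ii) the stability constraint ‖A x + g(x)u − x̄‖_{P₁} − ‖x − x̄‖_{P₁} ≤ −θ‖x − x̄‖; and (iii) the one-step optimality consequence ‖x⁺ − x̄‖_{P₂} ≤ ‖x⁺ − x̄‖_{P₁}. Then the Lyapunov decrement satisfies ‖x⁺ − x̄‖_{P₂} − ‖x − x̄‖_{P₁} ≤ 2√(λ_max(P₂))·δ + √(λ_max(P₁))·δ − θ‖x − x̄‖. (Per-step decrement inequality of Theorem 2.) -/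
/-!
Write `x⁺ − x̄ = (A x + g(x) u − x̄) + (f(x) − A x)`. Factoring `P₁ = Bᵀ B` turns `‖·‖_{P₁}` into the
Euclidean norm of `B ·`, so it satisfies the triangle inequality. Hence, after (iii),
`‖x⁺ − x̄‖_{P₂} ≤ ‖A x + g(x) u − x̄‖_{P₁} + ‖f(x) − A x‖_{P₁}`: the first term is controlled by the
stability constraint (ii), and the second by `√(λ_max(P₁)) δ` since `P₁ ≤ λ_max(P₁) I` in the
Loewner order. The term `2 √(λ_max(P₂)) δ` is nonnegative slack.
-/

open Matrix

noncomputable def enorm {n : ℕ} (z : Fin n → ℝ) : ℝ :=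
  Real.sqrt (z ⬝ᵥ z)

noncomputable def wnorm {n : ℕ} (Q : Matrix (Fin n) (Fin n) ℝ) (z : Fin n → ℝ) : ℝ :=
  Real.sqrt (z ⬝ᵥ Q.mulVec z)

open scoped MatrixOrder

lemma enorm_eq_norm_toLp {n : ℕ} (z : Fin n → ℝ) : _root_.enorm z = ‖WithLp.toLp 2 z‖ := by
  rw [EuclideanSpace.norm_eq, _root_.enorm]
  simp [dotProduct, sq]

lemma wnorm_star_mul_self {n : ℕ} (B : Matrix (Fin n) (Fin n) ℝ) (z : Fin n → ℝ) :
    wnorm (star B * B) z = _root_.enorm (B *ᵥ z) := by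
  rw [wnorm, _root_.enorm, ← mulVec_mulVec, dotProduct_mulVec, star_eq_conjTranspose,
    conjTranspose_eq_transpose_of_trivial, vecMul_transpose]

lemma wnorm_add_le {n : ℕ} {Q : Matrix (Fin n) (Fin n) ℝ} (hQ : Q.PosSemidef)
    (v w : Fin n → ℝ) : wnorm Q (v + w) ≤ wnorm Q v + wnorm Q w := by
  obtain ⟨B, rfl⟩ := CStarAlgebra.nonneg_iff_eq_star_mul_self.mp hQ.nonneg
  simpa only [wnorm_star_mul_self, enorm_eq_norm_toLp, mulVec_add, WithLp.toLp_add]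
    using norm_add_le _ _

lemma Matrix.IsHermitian.le_algebraMap_iSup_eigenvalues {n : ℕ}
    {Q : Matrix (Fin n) (Fin n) ℝ} (hQ : Q.IsHermitian) :
    Q ≤ algebraMap ℝ _ (⨆ i, hQ.eigenvalues i) := by
  refine le_algebraMap_of_spectrum_le ?_
  rw [hQ.spectrum_real_eq_range_eigenvalues]
  rintro _ ⟨i, rfl⟩
  exact le_ciSup (Set.finite_range _).bddAbove i

lemma Matrix.IsHermitian.dotProduct_mulVec_le_iSup_eigenvalues_mul {n : ℕ}
    {Q : Matrix (Fin n) (Fin n) ℝ} (hQ : Q.IsHermitian) (z : Fin n → ℝ) :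
    z ⬝ᵥ Q *ᵥ z ≤ (⨆ i, hQ.eigenvalues i) * (z ⬝ᵥ z) := by
  have h := (le_iff.mp hQ.le_algebraMap_iSup_eigenvalues).dotProduct_mulVec_nonneg z
  simpa only [star_trivial, Algebra.algebraMap_eq_smul_one, sub_mulVec, smul_mulVec, one_mulVec,
    dotProduct_sub, dotProduct_smul, smul_eq_mul, sub_nonneg] using h

lemma wnorm_le_sqrt_iSup_eigenvalues_mul_enorm {n : ℕ} {Q : Matrix (Fin n) (Fin n) ℝ}
    (hQ : Q.IsHermitian) (z : Fin n → ℝ) :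
    wnorm Q z ≤ Real.sqrt (⨆ i, hQ.eigenvalues i) * _root_.enorm z := by
  rw [wnorm, _root_.enorm, ← Real.sqrt_mul' _ (by simpa using dotProduct_star_self_nonneg z)]
  exact Real.sqrt_le_sqrt (hQ.dotProduct_mulVec_le_iSup_eigenvalues_mul z)

theorem one_step_lyapunov_decrement_general {n p : ℕ}
    (x xbar : Fin n → ℝ) (u : Fin p → ℝ)
    (f : (Fin n → ℝ) → (Fin n → ℝ)) (g : (Fin n → ℝ) → Matrix (Fin n) (Fin p) ℝ)
    (A : Matrix (Fin n) (Fin n) ℝ) (δ θ : ℝ)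
    (xplus : Fin n → ℝ) (hxplus : xplus = f x + (g x).mulVec u)
    (P₁ P₂ : Matrix (Fin n) (Fin n) ℝ) (hP₁ : P₁.PosDef) (hP₂ : P₂.PosDef)
    (hlin : _root_.enorm (f x - A.mulVec x) ≤ δ)
    (hstab : wnorm P₁ (A.mulVec x + (g x).mulVec u - xbar) - wnorm P₁ (x - xbar) ≤
      -θ * _root_.enorm (x - xbar))
    (hopt : wnorm P₂ (xplus - xbar) ≤ wnorm P₁ (xplus - xbar)) :
    wnorm P₂ (xplus - xbar) - wnorm P₁ (x - xbar) ≤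
      2 * Real.sqrt (⨆ i, hP₂.1.eigenvalues i) * δ +
        Real.sqrt (⨆ i, hP₁.1.eigenvalues i) * δ - θ * _root_.enorm (x - xbar) := by
  have hδ : 0 ≤ δ := (Real.sqrt_nonneg _).trans hlin
  have hsplit : xplus - xbar = (A *ᵥ x + g x *ᵥ u - xbar) + (f x - A *ᵥ x) := by
    rw [hxplus]; abel
  have htriangle : wnorm P₁ (xplus - xbar) ≤
      wnorm P₁ (A *ᵥ x + g x *ᵥ u - xbar) + wnorm P₁ (f x - A *ᵥ x) :=
    hsplit ▸ wnorm_add_le hP₁.posSemidef _ _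
  have hlin₁ : wnorm P₁ (f x - A *ᵥ x) ≤ Real.sqrt (⨆ i, hP₁.1.eigenvalues i) * δ :=
    (wnorm_le_sqrt_iSup_eigenvalues_mul_enorm hP₁.1 _).trans
      (mul_le_mul_of_nonneg_left hlin (Real.sqrt_nonneg _))
  have hslack : 0 ≤ 2 * Real.sqrt (⨆ i, hP₂.1.eigenvalues i) * δ := by positivity
  linarith

/-- per-step Lyapunov decrement inequality of Theorem 2. With
`x⁺ = f(x) + g(x)u`, assuming the linearization error bound, the stability
constraint, and the one-step optimality consequence, one has
`‖x⁺ − x̄‖_{P₂} − ‖x − x̄‖_{P₁} ≤ 2√(λ_max(P₂))·δ + √(λ_max(P₁))·δ − θ‖x − x̄‖`. -/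
theorem one_step_lyapunov_decrement {n p : ℕ}
    (x xbar : Fin n → ℝ) (u : Fin p → ℝ)
    (f : (Fin n → ℝ) → (Fin n → ℝ)) (g : (Fin n → ℝ) → Matrix (Fin n) (Fin p) ℝ)
    (A : Matrix (Fin n) (Fin n) ℝ) (δ θ : ℝ) (hδ : 0 ≤ δ) (hθ : 0 < θ)
    (xplus : Fin n → ℝ) (hxplus : xplus = f x + (g x).mulVec u)
    (P₁ P₂ : Matrix (Fin n) (Fin n) ℝ) (hP₁ : P₁.PosDef) (hP₂ : P₂.PosDef)
    (hlin : _root_.enorm (f x - A.mulVec x) ≤ δ)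
    (hstab : wnorm P₁ (A.mulVec x + (g x).mulVec u - xbar) - wnorm P₁ (x - xbar) ≤
      -θ * _root_.enorm (x - xbar))
    (hopt : wnorm P₂ (xplus - xbar) ≤ wnorm P₁ (xplus - xbar)) :
    wnorm P₂ (xplus - xbar) - wnorm P₁ (x - xbar) ≤
      2 * Real.sqrt (⨆ i, hP₂.1.eigenvalues i) * δ +
        Real.sqrt (⨆ i, hP₁.1.eigenvalues i) * δ - θ * _root_.enorm (x - xbar) :=
  one_step_lyapunov_decrement_general x xbar u f g A δ θ xplus hxplus P₁ P₂ hP₁ hP₂ hlin hstab hopt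
end

section
/- Let V : ℕ → ℝ and e : ℕ → ℝ be sequences, and let a, b, c, θ be positive reals with a ≤ b and θ < b. Assume for every t ∈ ℕ: e(t) ≥ 0, a·e(t) ≤ V(t) ≤ b·e(t), and V(t+1) − V(t) ≤ c − θ·e(t). Then the sequence e is bounded and limsup_{t→∞} e(t) ≤ (b·c)/(a·θ). (Discrete-time Lyapunov ultimate-boundedness lemma underlying the convergence conclusions of Theorems 2 and 3.) -/
/-!
With `K = b c / θ` and `q = 1 - θ / b ∈ [0, 1)`, the bound `V ≤ b e` turns the drift condition
into the contraction `V (t + 1) - K ≤ q (V t - K)`, so `V t ≤ K + qᵗ (V 0 - K)`. Since `a e ≤ V`,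
`e` is dominated by a sequence converging to `K / a = b c / (a θ)`.
-/

open Filter Topology

theorem Filter.limsup_le_of_le_of_tendsto {α β : Type*} [ConditionallyCompleteLinearOrder β]
    [TopologicalSpace β] [OrderTopology β] {f : Filter α} [f.NeBot] {u v : α → β} {b : β}
    (hu : f.IsBoundedUnder (· ≥ ·) u) (huv : u ≤ᶠ[f] v) (hv : Tendsto v f (𝓝 b)) :
    limsup u f ≤ b :=
  hv.limsup_eq ▸ limsup_le_limsup huv hu.isCoboundedUnder_le hv.isBoundedUnder_le

theorem sub_le_mul_sub_of_drift_le {v v' e b c θ : ℝ} (hb : 0 < b) (hθ : 0 < θ)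
    (hv : v ≤ b * e) (hdrift : v' - v ≤ c - θ * e) :
    v' - b * c / θ ≤ (1 - θ / b) * (v - b * c / θ) := by
  have hve : θ / b * v ≤ θ * e :=
    calc θ / b * v ≤ θ / b * (b * e) := by gcongr
      _ = θ * e := by field_simp
  have hK : (1 - θ / b) * (v - b * c / θ) = v - θ / b * v - b * c / θ + c := by
    field_simp
    ring
  linarith

theorem lyapunov_ultimate_boundedness_general (V e : ℕ → ℝ) (a b c θ : ℝ)
    (ha : 0 < a) (hθ : 0 < θ)
    (hθb : θ < b)
    (he : ∀ t, 0 ≤ e t)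
    (hVlow : ∀ t, a * e t ≤ V t) (hVup : ∀ t, V t ≤ b * e t)
    (hdec : ∀ t, V (t + 1) - V t ≤ c - θ * e t) :
    (∃ M : ℝ, ∀ t, e t ≤ M) ∧
      Filter.limsup e Filter.atTop ≤ b * c / (a * θ) := by
  have hb : 0 < b := hθ.trans hθb
  set K := b * c / θ
  set q := 1 - θ / b
  have hq₀ : 0 ≤ q := sub_nonneg.2 ((div_le_one hb).2 hθb.le)
  have hq₁ : q < 1 := sub_lt_self 1 (div_pos hθ hb)
  have hV (t : ℕ) : V t - K ≤ q ^ t * (V 0 - K) :=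
    le_geom (u := fun t ↦ V t - K) hq₀ t fun k _ ↦
      sub_le_mul_sub_of_drift_le hb hθ (hVup k) (hdec k)
  set g : ℕ → ℝ := fun t ↦ (K + q ^ t * (V 0 - K)) / a
  have hle (t : ℕ) : e t ≤ g t := by
    rw [le_div_iff₀ ha]
    linarith [hVlow t, hV t]
  have hg : Tendsto g atTop (𝓝 (b * c / (a * θ))) := by
    have := ((tendsto_pow_atTop_nhds_zero_of_lt_one hq₀ hq₁).mul_const (V 0 - K)).const_add K
      |>.div_const a
    convert this using 2
    simp only [zero_mul, add_zero, K]
    field_simp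
  obtain ⟨M, hM⟩ := hg.bddAbove_range
  exact ⟨⟨M, fun t ↦ (hle t).trans (hM ⟨t, rfl⟩)⟩,
    limsup_le_of_le_of_tendsto ⟨0, eventually_map.2 (.of_forall he)⟩ (.of_forall hle) hg⟩

/-- discrete-time Lyapunov ultimate-boundedness lemma. If
`a·e(t) ≤ V(t) ≤ b·e(t)`, `e(t) ≥ 0`, and `V(t+1) − V(t) ≤ c − θ·e(t)` for all
`t`, with `0 < a ≤ b`, `c > 0`, and `0 < θ < b`, then `e` is bounded and
`limsup_{t→∞} e(t) ≤ (b·c)/(a·θ)`. -/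
theorem lyapunov_ultimate_boundedness (V e : ℕ → ℝ) (a b c θ : ℝ)
    (ha : 0 < a) (hb : 0 < b) (hc : 0 < c) (hθ : 0 < θ)
    (hab : a ≤ b) (hθb : θ < b)
    (he : ∀ t, 0 ≤ e t)
    (hVlow : ∀ t, a * e t ≤ V t) (hVup : ∀ t, V t ≤ b * e t)
    (hdec : ∀ t, V (t + 1) - V t ≤ c - θ * e t) :
    (∃ M : ℝ, ∀ t, e t ≤ M) ∧
      Filter.limsup e Filter.atTop ≤ b * c / (a * θ) :=
  lyapunov_ultimate_boundedness_general V e a b c θ ha hθ hθb he hVlow hVup hdec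
end

section
/- Let x : ℕ → ℝⁿ be a sequence, x̄ ∈ ℝⁿ, let P ∈ ℝ^{n×n} be a fixed symmetric positive definite matrix, and let θ > 0 satisfy √(λ_min(P)) > θ. Assume that for every t ∈ ℕ the decrease condition ‖x(t+1) − x̄‖_P − ‖x(t) − x̄‖_P ≤ −θ‖x(t) − x̄‖ holds. Then the sequence converges exponentially: for every t ∈ ℕ, ‖x(t) − x̄‖ ≤ √(λ_max(P)/λ_min(P)) · (1 − θ/√(λ_max(P)))^t · ‖x(0) − x̄‖. (Exponential stability claim of Remark 1 for constant Lyapunov matrix.) -/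
open Matrix

/-- Euclidean norm on `ℝⁿ`: `‖z‖ = √(zᵀ z)`. -/
noncomputable def enormR {n : ℕ} (z : Fin n → ℝ) : ℝ :=
  Real.sqrt (z ⬝ᵥ z)

/-! The spectral theorem squeezes the weighted norm between `√λ_min ‖·‖` and `√λ_max ‖·‖`.
Hence `θ ‖z‖ ≥ (θ / √λ_max) ‖z‖_P`, so the decrease condition makes `‖x(t) − x̄‖_P` contract by
the factor `1 − θ / √λ_max` at every step, and passing back to the Euclidean norm at both ends
costs the factor `√(λ_max / λ_min)`. -/

theorem Real.iInf_le_iSup_of_finite {ι : Type*} [Finite ι] (f : ι → ℝ) :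
    ⨅ i, f i ≤ ⨆ i, f i := by
  cases isEmpty_or_nonempty ι
  · simp [Real.iInf_of_isEmpty, Real.iSup_of_isEmpty]
  · exact ciInf_le_ciSup (Finite.bddBelow_range f) (Finite.bddAbove_range f)

namespace Matrix

variable {ι : Type*} [Fintype ι] [DecidableEq ι]

theorem mulVec_dotProduct_mulVec_of_mem_unitaryGroup {U : Matrix ι ι ℝ}
    (hU : U ∈ unitaryGroup ι ℝ) (z : ι → ℝ) : U *ᵥ z ⬝ᵥ U *ᵥ z = z ⬝ᵥ z := by
  have hUtU : Uᵀ * U = 1 := by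
    simpa [star_eq_conjTranspose, conjTranspose_eq_transpose_of_trivial] using
      (mem_unitaryGroup_iff').mp hU
  rw [dotProduct_mulVec, ← mulVec_transpose, mulVec_mulVec, hUtU, one_mulVec]

namespace IsHermitian

variable {A : Matrix ι ι ℝ} (hA : A.IsHermitian)
include hA

theorem dotProduct_mulVec_eq_sum_eigenvalues (z : ι → ℝ) :
    z ⬝ᵥ A *ᵥ z =
      ∑ i, hA.eigenvalues i * (star (hA.eigenvectorUnitary : Matrix ι ι ℝ) *ᵥ z) i ^ 2 := by
  set U : Matrix ι ι ℝ := (hA.eigenvectorUnitary : Matrix ι ι ℝ) with hU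
  have hUt : star U = Uᵀ := by simp [star_eq_conjTranspose, conjTranspose_eq_transpose_of_trivial]
  conv_lhs => rw [hA.spectral_theorem, Unitary.conjStarAlgAut_apply, ← hU]
  rw [← mulVec_mulVec, ← mulVec_mulVec, dotProduct_mulVec z U, ← mulVec_transpose, ← hUt,
    dotProduct]
  refine Finset.sum_congr rfl fun i _ => ?_
  simp only [mulVec_diagonal, Function.comp_apply, RCLike.ofReal_real_eq_id, id_eq]
  ring

theorem iInf_eigenvalues_mul_dotProduct_self_le (z : ι → ℝ) :
    (⨅ i, hA.eigenvalues i) * (z ⬝ᵥ z) ≤ z ⬝ᵥ A *ᵥ z := by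
  rw [dotProduct_mulVec_eq_sum_eigenvalues,
    ← mulVec_dotProduct_mulVec_of_mem_unitaryGroup (star hA.eigenvectorUnitary).2 z, dotProduct,
    Finset.mul_sum]
  refine Finset.sum_le_sum fun i _ => ?_
  rw [Unitary.coe_star, ← sq]
  exact mul_le_mul_of_nonneg_right (ciInf_le (Finite.bddBelow_range _) i) (sq_nonneg _)

theorem dotProduct_mulVec_le_iSup_eigenvalues_mul_s10 (z : ι → ℝ) :
    z ⬝ᵥ A *ᵥ z ≤ (⨆ i, hA.eigenvalues i) * (z ⬝ᵥ z) := by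
  rw [dotProduct_mulVec_eq_sum_eigenvalues,
    ← mulVec_dotProduct_mulVec_of_mem_unitaryGroup (star hA.eigenvectorUnitary).2 z, dotProduct,
    Finset.mul_sum]
  refine Finset.sum_le_sum fun i _ => ?_
  rw [Unitary.coe_star, ← sq]
  exact mul_le_mul_of_nonneg_right (le_ciSup (Finite.bddAbove_range _) i) (sq_nonneg _)

end IsHermitian
end Matrix

section WeightedNorm

variable {n : ℕ} {P : Matrix (Fin n) (Fin n) ℝ} (hP : P.IsHermitian)
include hP

theorem sqrt_iInf_eigenvalues_mul_enormR_le_wnorm (z : Fin n → ℝ) :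
    √(⨅ i, hP.eigenvalues i) * enormR z ≤ wnorm P z := by
  rw [enormR, wnorm, ← Real.sqrt_mul' _ (by simpa using dotProduct_self_star_nonneg z)]
  exact Real.sqrt_le_sqrt (hP.iInf_eigenvalues_mul_dotProduct_self_le z)

theorem wnorm_le_sqrt_iSup_eigenvalues_mul_enormR (z : Fin n → ℝ) :
    wnorm P z ≤ √(⨆ i, hP.eigenvalues i) * enormR z := by
  rw [enormR, wnorm, ← Real.sqrt_mul' _ (by simpa using dotProduct_self_star_nonneg z)]
  exact Real.sqrt_le_sqrt (hP.dotProduct_mulVec_le_iSup_eigenvalues_mul_s10 z)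

end WeightedNorm

theorem le_mul_pow_of_lyapunov_decrease {V e : ℕ → ℝ} {a b θ : ℝ} (hb : 0 < b) (hθ : 0 < θ)
    (hθa : θ ≤ a) (hlow : ∀ t, b * e t ≤ V t) (hup : ∀ t, V t ≤ a * e t)
    (hdec : ∀ t, V (t + 1) - V t ≤ -θ * e t) (t : ℕ) :
    e t ≤ a / b * (1 - θ / a) ^ t * e 0 := by
  have ha : 0 < a := hθ.trans_le hθa
  have hr : 0 ≤ 1 - θ / a := sub_nonneg.2 ((div_le_one ha).2 hθa)
  have hcontract : ∀ k, V (k + 1) ≤ (1 - θ / a) * V k := fun k => by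
    have : θ / a * V k ≤ θ * e k :=
      calc θ / a * V k ≤ θ / a * (a * e k) := by gcongr; exact hup k
        _ = θ * e k := by field_simp
    linarith [hdec k]
  rw [div_mul_eq_mul_div, div_mul_eq_mul_div, le_div_iff₀ hb]
  calc e t * b ≤ V t := by linarith [hlow t]
    _ ≤ (1 - θ / a) ^ t * V 0 := le_geom hr t fun k _ => hcontract k
    _ ≤ (1 - θ / a) ^ t * (a * e 0) := by gcongr; exact hup 0
    _ = a * (1 - θ / a) ^ t * e 0 := by ring

/-- exponential stability with a constant Lyapunov matrix
(Remark 1). If `√(λ_min(P)) > θ > 0` and the decrease condition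
`‖x(t+1) − x̄‖_P − ‖x(t) − x̄‖_P ≤ −θ‖x(t) − x̄‖` holds for all `t`, then
`‖x(t) − x̄‖ ≤ √(λ_max(P)/λ_min(P))·(1 − θ/√(λ_max(P)))^t·‖x(0) − x̄‖`. -/
theorem constant_lyapunov_exponential_stability {n : ℕ}
    (x : ℕ → (Fin n → ℝ)) (xbar : Fin n → ℝ)
    (P : Matrix (Fin n) (Fin n) ℝ) (hP : P.PosDef)
    (θ : ℝ) (hθ : 0 < θ)
    (hθmin : θ < Real.sqrt (⨅ i, hP.1.eigenvalues i))
    (hdec : ∀ t, wnorm P (x (t + 1) - xbar) - wnorm P (x t - xbar) ≤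
      -θ * enormR (x t - xbar)) :
    ∀ t : ℕ, enormR (x t - xbar) ≤
      Real.sqrt ((⨆ i, hP.1.eigenvalues i) / (⨅ i, hP.1.eigenvalues i)) *
        (1 - θ / Real.sqrt (⨆ i, hP.1.eigenvalues i)) ^ t * enormR (x 0 - xbar) := by
  have hmin : 0 < √(⨅ i, hP.1.eigenvalues i) := hθ.trans hθmin
  have hθmax : θ ≤ √(⨆ i, hP.1.eigenvalues i) :=
    hθmin.le.trans (Real.sqrt_le_sqrt (Real.iInf_le_iSup_of_finite _))
  rw [Real.sqrt_div' _ (Real.sqrt_pos.1 hmin).le]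
  exact le_mul_pow_of_lyapunov_decrease hmin hθ hθmax
    (fun _ => sqrt_iInf_eigenvalues_mul_enormR_le_wnorm hP.1 _)
    (fun _ => wnorm_le_sqrt_iSup_eigenvalues_mul_enormR hP.1 _) hdec
end

section
/- Let x, x̄ ∈ ℝⁿ, u, Δu ∈ ℝᵖ with ‖Δu‖ ≤ Δ̄u, let f : ℝⁿ → ℝⁿ, let g : ℝⁿ → ℝ^{n×p} be μ_g-Lipschitz in operator norm, let A ∈ ℝ^{n×n}, δ ≥ 0, θ > 0, and set x⁺ := f(x) + g(x)(u + Δu). Let P₁, P₂ ∈ ℝ^{n×n} be symmetric positive definite with 0 < λ_low ≤ λ_min(Pᵢ) and λ_max(Pᵢ) ≤ λ_up for i = 1,2, and let ΔP₁, ΔP₂ ∈ ℝ^{n×n} be symmetric with ‖ΔPᵢ‖ ≤ Δ̄P (operator norm). Assume: (i) ‖f(x) − A x‖ ≤ δ; (ii) ‖A x + g(x)u − x̄‖_{P₁} − ‖x − x̄‖_{P₁} ≤ −θ‖x − x̄‖; and (iii) ‖f(x) + g(x)u − x̄‖_{P₂} ≤ ‖f(x) + g(x)u − x̄‖_{P₁}.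 Then, with ‖z‖_Q := √|zᵀ Q z|, the perturbed Lyapunov decrement satisfies ‖x⁺ − x̄‖_{P₂+ΔP₂} − ‖x − x̄‖_{P₁+ΔP₁} ≤ 3√(λ_up)·δ + √(Δ̄P)·δ + (√(λ_up) + √(Δ̄P))·‖g(x̄)‖·Δ̄u − (θ − √(Δ̄P) − √(Δ̄P)·√(λ_up)/√(λ_low) − (√(λ_up) + √(Δ̄P))·μ_g·Δ̄u)·‖x − x̄‖. In particular, if θ > √(Δ̄P) + √(Δ̄P)·√(λ_up)/√(λ_low) + (√(λ_up) + √(Δ̄P))·μ_g·Δ̄u, then the perturbed Lyapunov function strictly decreases whenever ‖x − x̄‖ > ϑ := (3√(λ_up)·δ + √(Δ̄P)·δ + (√(λ_up) + √(Δ̄P))·‖g(x̄)‖·Δ̄u)/(θ − √(Δ̄P) − √(Δ̄P)·√(λ_up)/√(λ_low) − (√(λ_up) + √(Δ̄P))·μ_g·Δ̄u). (Core inequality of Theorem 3: stability of the closed loop with the trained NN in the loop.) -/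
open Matrix

/-- Euclidean norm on `ℝⁿ`: `‖z‖ = √(zᵀ z)`. -/
noncomputable def eucNorm {n : ℕ} (z : Fin n → ℝ) : ℝ :=
  Real.sqrt (z ⬝ᵥ z)

/-- Generalized weighted norm `‖z‖_Q = √|zᵀ Q z|` for a symmetric matrix `Q`;
when `Q` is positive definite this equals `√(zᵀ Q z)`. -/
noncomputable def gwnorm {n : ℕ} (Q : Matrix (Fin n) (Fin n) ℝ) (z : Fin n → ℝ) : ℝ :=
  Real.sqrt |z ⬝ᵥ Q.mulVec z|

/-- Operator (spectral) norm of a matrix, induced by the Euclidean norms. -/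
noncomputable def opnorm {m k : ℕ} (Q : Matrix (Fin m) (Fin k) ℝ) : ℝ :=
  ‖LinearMap.toContinuousLinearMap (Matrix.toEuclideanLin Q)‖

/-!
Write `x⁺ - x̄ = v + d + e` with `v = A x + g(x) u - x̄` the error of the linearised closed
loop, `d = f(x) - A x` the linearisation error and `e = g(x) Δu` the input perturbation.
The triangle inequality for `‖·‖_{P₂}` (the Euclidean norm after `P₂^{1/2}`), the comparison
`‖·‖_{P₂} ≤ ‖·‖_{P₁}` at `v + d` and the stability constraint at `v` give the nominal decrement
`‖x⁺ - x̄‖_{P₂} - ‖x - x̄‖_{P₁} ≤ √λ_up (δ + ‖e‖) - θ ‖x - x̄‖`. Since `‖·‖_{P + ΔP}` and `‖·‖_P`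
differ by at most `‖·‖_{ΔP} ≤ √Δ̄P ‖·‖`, passing to the perturbed matrices costs at most
`√Δ̄P (‖x⁺ - x̄‖ + ‖x - x̄‖)`. Finally `‖v‖ ≤ (√λ_up / √λ_low) ‖x - x̄‖` by the stability
constraint and the eigenvalue bounds, and `‖e‖ ≤ (‖g(x̄)‖ + μ_g ‖x - x̄‖) Δ̄u` by the Lipschitz
bound on `g`.
-/

namespace Matrix.IsHermitian

variable {ι : Type*} [Fintype ι] [DecidableEq ι] {P : Matrix ι ι ℝ} (hP : P.IsHermitian)
  (z : ι → ℝ)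

theorem dotProduct_mulVec_self_eq_sum_eigenvalues :
    z ⬝ᵥ P *ᵥ z =
      ∑ i, hP.eigenvalues i * (star (hP.eigenvectorUnitary : Matrix ι ι ℝ) *ᵥ z) i ^ 2 := by
  conv_lhs => rw [hP.spectral_theorem, Unitary.conjStarAlgAut_apply]
  rw [← mulVec_mulVec, ← mulVec_mulVec, dotProduct_mulVec, ← mulVec_transpose,
    ← conjTranspose_eq_transpose_of_trivial, ← star_eq_conjTranspose]
  simp [dotProduct, mulVec_diagonal, sq, mul_left_comm]

theorem dotProduct_self_eq_sum_eigenvectorUnitary :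
    z ⬝ᵥ z = ∑ i, (star (hP.eigenvectorUnitary : Matrix ι ι ℝ) *ᵥ z) i ^ 2 := by
  set U : Matrix ι ι ℝ := (hP.eigenvectorUnitary : Matrix ι ι ℝ)
  have hU : U * star U = 1 := mem_unitaryGroup_iff.mp hP.eigenvectorUnitary.2
  calc z ⬝ᵥ z = z ⬝ᵥ (U * star U) *ᵥ z := by rw [hU, one_mulVec]
    _ = _ := by
      rw [← mulVec_mulVec, dotProduct_mulVec, ← mulVec_transpose,
        ← conjTranspose_eq_transpose_of_trivial, ← star_eq_conjTranspose]
      simp [dotProduct, sq]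

theorem iInf_eigenvalues_mul_le :
    (⨅ i, hP.eigenvalues i) * (z ⬝ᵥ z) ≤ z ⬝ᵥ P *ᵥ z := by
  rw [hP.dotProduct_mulVec_self_eq_sum_eigenvalues, hP.dotProduct_self_eq_sum_eigenvectorUnitary,
    Finset.mul_sum]
  exact Finset.sum_le_sum fun i _ ↦ mul_le_mul_of_nonneg_right
    (ciInf_le (Set.finite_range _).bddBelow i) (sq_nonneg _)

theorem le_iSup_eigenvalues_mul :
    z ⬝ᵥ P *ᵥ z ≤ (⨆ i, hP.eigenvalues i) * (z ⬝ᵥ z) := by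
  rw [hP.dotProduct_mulVec_self_eq_sum_eigenvalues, hP.dotProduct_self_eq_sum_eigenvectorUnitary,
    Finset.mul_sum]
  exact Finset.sum_le_sum fun i _ ↦ mul_le_mul_of_nonneg_right
    (le_ciSup (Set.finite_range _).bddAbove i) (sq_nonneg _)

end Matrix.IsHermitian

theorem Real.sqrt_add_le_sqrt_add_sqrt {a b : ℝ} (ha : 0 ≤ a) (hb : 0 ≤ b) :
    √(a + b) ≤ √a + √b := by
  rw [Real.sqrt_le_left (by positivity)]
  nlinarith [Real.sq_sqrt ha, Real.sq_sqrt hb, Real.sqrt_nonneg a, Real.sqrt_nonneg b]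

section Norms

variable {n m : ℕ}

theorem eucNorm_eq_norm (z : Fin n → ℝ) : eucNorm z = ‖WithLp.toLp 2 z‖ := by
  rw [eucNorm, EuclideanSpace.norm_eq]
  simp [dotProduct, sq]

theorem eucNorm_nonneg (z : Fin n → ℝ) : 0 ≤ eucNorm z := Real.sqrt_nonneg _

theorem eucNorm_add_le (a b : Fin n → ℝ) : eucNorm (a + b) ≤ eucNorm a + eucNorm b := by
  simpa only [eucNorm_eq_norm, WithLp.toLp_add] using norm_add_le _ _

theorem abs_dotProduct_le (a b : Fin n → ℝ) : |a ⬝ᵥ b| ≤ eucNorm a * eucNorm b := by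
  have h := abs_real_inner_le_norm (WithLp.toLp 2 a) (WithLp.toLp 2 b)
  rwa [EuclideanSpace.inner_toLp_toLp, star_trivial, dotProduct_comm, ← eucNorm_eq_norm,
    ← eucNorm_eq_norm] at h

theorem opnorm_nonneg (Q : Matrix (Fin m) (Fin n) ℝ) : 0 ≤ opnorm Q := norm_nonneg _

theorem opnorm_add_le (Q R : Matrix (Fin m) (Fin n) ℝ) :
    opnorm (Q + R) ≤ opnorm Q + opnorm R := by
  unfold opnorm
  rw [map_add, map_add]
  exact norm_add_le _ _

theorem eucNorm_mulVec_le (Q : Matrix (Fin m) (Fin n) ℝ) (z : Fin n → ℝ) :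
    eucNorm (Q *ᵥ z) ≤ opnorm Q * eucNorm z := by
  have h : WithLp.toLp 2 (Q *ᵥ z) =
      LinearMap.toContinuousLinearMap (Matrix.toEuclideanLin Q) (WithLp.toLp 2 z) := rfl
  rw [eucNorm_eq_norm, eucNorm_eq_norm, h]
  exact ContinuousLinearMap.le_opNorm _ _

theorem eucNorm_mulVec_le_of_opnorm_sub_le {Q Q₀ : Matrix (Fin m) (Fin n) ℝ} {r c : ℝ}
    (hQ : opnorm (Q - Q₀) ≤ r) {z : Fin n → ℝ} (hz : eucNorm z ≤ c) :
    eucNorm (Q *ᵥ z) ≤ (opnorm Q₀ + r) * c := by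
  have hQ' : opnorm Q ≤ opnorm Q₀ + r := by
    have h := opnorm_add_le Q₀ (Q - Q₀)
    rw [add_sub_cancel] at h
    linarith
  calc eucNorm (Q *ᵥ z) ≤ opnorm Q * eucNorm z := eucNorm_mulVec_le Q z
    _ ≤ (opnorm Q₀ + r) * c :=
      mul_le_mul hQ' hz (eucNorm_nonneg z) ((opnorm_nonneg Q).trans hQ')

end Norms

section WeightedNorm

variable {n : ℕ}

theorem gwnorm_neg_matrix (Q : Matrix (Fin n) (Fin n) ℝ) (z : Fin n → ℝ) :
    gwnorm (-Q) z = gwnorm Q z := by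
  simp [gwnorm, Matrix.neg_mulVec]

theorem gwnorm_matrix_add_le (P Q : Matrix (Fin n) (Fin n) ℝ) (z : Fin n → ℝ) :
    gwnorm (P + Q) z ≤ gwnorm P z + gwnorm Q z := by
  rw [gwnorm, Matrix.add_mulVec, dotProduct_add]
  exact (Real.sqrt_le_sqrt (abs_add_le _ _)).trans
    (Real.sqrt_add_le_sqrt_add_sqrt (abs_nonneg _) (abs_nonneg _))

theorem gwnorm_le_matrix_add (P Q : Matrix (Fin n) (Fin n) ℝ) (z : Fin n → ℝ) :
    gwnorm P z ≤ gwnorm (P + Q) z + gwnorm Q z := by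
  simpa [gwnorm_neg_matrix] using gwnorm_matrix_add_le (P + Q) (-Q) z

theorem gwnorm_le_sqrt_mul_eucNorm_of_opnorm_le {Q : Matrix (Fin n) (Fin n) ℝ} {c : ℝ}
    (hQ : opnorm Q ≤ c) (z : Fin n → ℝ) : gwnorm Q z ≤ √c * eucNorm z := by
  have hquad : |z ⬝ᵥ Q *ᵥ z| ≤ c * eucNorm z ^ 2 :=
    calc |z ⬝ᵥ Q *ᵥ z| ≤ eucNorm z * (opnorm Q * eucNorm z) :=
          (abs_dotProduct_le _ _).trans
            (mul_le_mul_of_nonneg_left (eucNorm_mulVec_le Q z) (eucNorm_nonneg z))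
      _ ≤ c * eucNorm z ^ 2 := by nlinarith [eucNorm_nonneg z, sq_nonneg (eucNorm z)]
  calc gwnorm Q z ≤ √(c * eucNorm z ^ 2) := Real.sqrt_le_sqrt hquad
    _ = √c * eucNorm z := by rw [Real.sqrt_mul' _ (sq_nonneg _), Real.sqrt_sq (eucNorm_nonneg z)]

theorem gwnorm_eq_sqrt_of_posSemidef {P : Matrix (Fin n) (Fin n) ℝ} (hP : P.PosSemidef)
    (z : Fin n → ℝ) : gwnorm P z = √(z ⬝ᵥ P *ᵥ z) := by
  rw [gwnorm, abs_of_nonneg (by simpa using hP.dotProduct_mulVec_nonneg z)]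

theorem gwnorm_le_sqrt_mul_eucNorm_of_iSup_eigenvalues_le {P : Matrix (Fin n) (Fin n) ℝ}
    (hP : P.PosSemidef) {c : ℝ} (hc : (⨆ i, hP.1.eigenvalues i) ≤ c) (z : Fin n → ℝ) :
    gwnorm P z ≤ √c * eucNorm z := by
  have hz : 0 ≤ z ⬝ᵥ z := by simpa using dotProduct_star_self_nonneg z
  rw [gwnorm_eq_sqrt_of_posSemidef hP, eucNorm, ← Real.sqrt_mul' _ hz]
  exact Real.sqrt_le_sqrt ((hP.1.le_iSup_eigenvalues_mul z).trans
    (mul_le_mul_of_nonneg_right hc hz))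

theorem sqrt_mul_eucNorm_le_gwnorm_of_le_iInf_eigenvalues {P : Matrix (Fin n) (Fin n) ℝ}
    (hP : P.IsHermitian) {c : ℝ} (hc : c ≤ ⨅ i, hP.eigenvalues i) (z : Fin n → ℝ) :
    √c * eucNorm z ≤ gwnorm P z := by
  have hz : 0 ≤ z ⬝ᵥ z := by simpa using dotProduct_star_self_nonneg z
  rw [gwnorm, eucNorm, ← Real.sqrt_mul' _ hz]
  exact Real.sqrt_le_sqrt (((mul_le_mul_of_nonneg_right hc hz).trans
    (hP.iInf_eigenvalues_mul_le z)).trans (le_abs_self _))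

open scoped MatrixOrder in
theorem gwnorm_eq_eucNorm_sqrt_mulVec {P : Matrix (Fin n) (Fin n) ℝ} (hP : P.PosSemidef)
    (z : Fin n → ℝ) : gwnorm P z = eucNorm (CFC.sqrt P *ᵥ z) := by
  have hP' : 0 ≤ P := Matrix.nonneg_iff_posSemidef.mpr hP
  have hsymm : (CFC.sqrt P)ᵀ = CFC.sqrt P := by
    rw [← conjTranspose_eq_transpose_of_trivial]
    exact (Matrix.nonneg_iff_posSemidef.mp (CFC.sqrt_nonneg P)).1
  rw [gwnorm_eq_sqrt_of_posSemidef hP, eucNorm]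
  conv_lhs => rw [← CFC.sqrt_mul_sqrt_self P hP']
  rw [← mulVec_mulVec, dotProduct_mulVec, ← mulVec_transpose, hsymm]

theorem gwnorm_add_le {P : Matrix (Fin n) (Fin n) ℝ} (hP : P.PosSemidef) (a b : Fin n → ℝ) :
    gwnorm P (a + b) ≤ gwnorm P a + gwnorm P b := by
  simpa only [gwnorm_eq_eucNorm_sqrt_mulVec hP, mulVec_add] using eucNorm_add_le _ _

end WeightedNorm

section Decrement

variable {n : ℕ}

theorem gwnorm_add_sub_gwnorm_add_le (P₁ P₂ : Matrix (Fin n) (Fin n) ℝ)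
    {ΔP₁ ΔP₂ : Matrix (Fin n) (Fin n) ℝ} {c : ℝ} (h₁ : opnorm ΔP₁ ≤ c) (h₂ : opnorm ΔP₂ ≤ c)
    (y z : Fin n → ℝ) :
    gwnorm (P₂ + ΔP₂) y - gwnorm (P₁ + ΔP₁) z ≤
      gwnorm P₂ y - gwnorm P₁ z + √c * (eucNorm y + eucNorm z) := by
  have := gwnorm_matrix_add_le P₂ ΔP₂ y
  have := gwnorm_le_matrix_add P₁ ΔP₁ z
  have := gwnorm_le_sqrt_mul_eucNorm_of_opnorm_le h₂ y
  have := gwnorm_le_sqrt_mul_eucNorm_of_opnorm_le h₁ z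
  linarith

theorem gwnorm_add_add_sub_gwnorm_le {P₁ P₂ : Matrix (Fin n) (Fin n) ℝ} (hP₁ : P₁.PosSemidef)
    (hP₂ : P₂.PosSemidef) {c δ θ : ℝ} (hmax₁ : (⨆ i, hP₁.1.eigenvalues i) ≤ c)
    (hmax₂ : (⨆ i, hP₂.1.eigenvalues i) ≤ c) {v d e z : Fin n → ℝ} (hd : eucNorm d ≤ δ)
    (hdecr : gwnorm P₁ v - gwnorm P₁ z ≤ -θ * eucNorm z)
    (hP₂P₁ : gwnorm P₂ (v + d) ≤ gwnorm P₁ (v + d)) :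
    gwnorm P₂ (v + d + e) - gwnorm P₁ z ≤ √c * (δ + eucNorm e) - θ * eucNorm z := by
  have := gwnorm_add_le hP₂ (v + d) e
  have := gwnorm_add_le hP₁ v d
  have := gwnorm_le_sqrt_mul_eucNorm_of_iSup_eigenvalues_le hP₂ hmax₂ e
  have := gwnorm_le_sqrt_mul_eucNorm_of_iSup_eigenvalues_le hP₁ hmax₁ d
  have := mul_le_mul_of_nonneg_left hd (Real.sqrt_nonneg c)
  linarith

theorem eucNorm_le_of_gwnorm_sub_le {P : Matrix (Fin n) (Fin n) ℝ} (hP : P.PosSemidef)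
    {cLow cUp θ : ℝ} (hcLow : 0 < cLow) (hmin : cLow ≤ ⨅ i, hP.1.eigenvalues i)
    (hmax : (⨆ i, hP.1.eigenvalues i) ≤ cUp) (hθ : 0 ≤ θ) {v z : Fin n → ℝ}
    (hdecr : gwnorm P v - gwnorm P z ≤ -θ * eucNorm z) :
    eucNorm v ≤ √cUp / √cLow * eucNorm z := by
  rw [div_mul_eq_mul_div, le_div_iff₀' (Real.sqrt_pos.mpr hcLow)]
  have := sqrt_mul_eucNorm_le_gwnorm_of_le_iInf_eigenvalues hP.1 hmin v
  have := gwnorm_le_sqrt_mul_eucNorm_of_iSup_eigenvalues_le hP hmax z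
  have := mul_nonneg hθ (eucNorm_nonneg z)
  linarith

end Decrement

theorem nn_in_the_loop_core_inequality_general {n p : ℕ}
    (x xbar : Fin n → ℝ) (u Δu : Fin p → ℝ)
    (Δubar : ℝ) (hΔu : eucNorm Δu ≤ Δubar)
    (f : (Fin n → ℝ) → (Fin n → ℝ)) (g : (Fin n → ℝ) → Matrix (Fin n) (Fin p) ℝ)
    (μg : ℝ) (hLip : ∀ a b : Fin n → ℝ, opnorm (g a - g b) ≤ μg * eucNorm (a - b))
    (A : Matrix (Fin n) (Fin n) ℝ) (δ θ : ℝ) (hδ : 0 ≤ δ) (hθ : 0 < θ)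
    (xplus : Fin n → ℝ) (hxplus : xplus = f x + (g x).mulVec (u + Δu))
    (P₁ P₂ ΔP₁ ΔP₂ : Matrix (Fin n) (Fin n) ℝ)
    (hP₁ : P₁.PosDef) (hP₂ : P₂.PosDef)
    (lamLow lamUp ΔPbar : ℝ) (hlamLow : 0 < lamLow)
    (hmin₁ : lamLow ≤ ⨅ i, hP₁.1.eigenvalues i)
    (hmax₁ : (⨆ i, hP₁.1.eigenvalues i) ≤ lamUp)
    (hmax₂ : (⨆ i, hP₂.1.eigenvalues i) ≤ lamUp)
    (hΔP₁le : opnorm ΔP₁ ≤ ΔPbar) (hΔP₂le : opnorm ΔP₂ ≤ ΔPbar)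
    (hlin : eucNorm (f x - A.mulVec x) ≤ δ)
    (hstab : gwnorm P₁ (A.mulVec x + (g x).mulVec u - xbar) - gwnorm P₁ (x - xbar) ≤
      -θ * eucNorm (x - xbar))
    (hopt : gwnorm P₂ (f x + (g x).mulVec u - xbar) ≤
      gwnorm P₁ (f x + (g x).mulVec u - xbar)) :
    gwnorm (P₂ + ΔP₂) (xplus - xbar) - gwnorm (P₁ + ΔP₁) (x - xbar) ≤
      3 * Real.sqrt lamUp * δ + Real.sqrt ΔPbar * δ +
        (Real.sqrt lamUp + Real.sqrt ΔPbar) * opnorm (g xbar) * Δubar -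
        (θ - Real.sqrt ΔPbar - Real.sqrt ΔPbar * Real.sqrt lamUp / Real.sqrt lamLow -
          (Real.sqrt lamUp + Real.sqrt ΔPbar) * μg * Δubar) * eucNorm (x - xbar) ∧
    (θ > Real.sqrt ΔPbar + Real.sqrt ΔPbar * Real.sqrt lamUp / Real.sqrt lamLow +
        (Real.sqrt lamUp + Real.sqrt ΔPbar) * μg * Δubar →
      eucNorm (x - xbar) >
        (3 * Real.sqrt lamUp * δ + Real.sqrt ΔPbar * δ +
          (Real.sqrt lamUp + Real.sqrt ΔPbar) * opnorm (g xbar) * Δubar) /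
        (θ - Real.sqrt ΔPbar - Real.sqrt ΔPbar * Real.sqrt lamUp / Real.sqrt lamLow -
          (Real.sqrt lamUp + Real.sqrt ΔPbar) * μg * Δubar) →
      gwnorm (P₂ + ΔP₂) (xplus - xbar) - gwnorm (P₁ + ΔP₁) (x - xbar) < 0) := by
  set v := A *ᵥ x + g x *ᵥ u - xbar
  set d := f x - A *ᵥ x
  set e := g x *ᵥ Δu
  have hsplit : xplus - xbar = v + d + e := by simp only [hxplus, v, d, e, mulVec_add]; abel
  rw [show f x + g x *ᵥ u - xbar = v + d by simp only [v, d]; abel] at hopt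
  have hv := eucNorm_le_of_gwnorm_sub_le hP₁.posSemidef hlamLow hmin₁ hmax₁ hθ.le hstab
  have hplus : eucNorm (v + d + e) ≤ √lamUp / √lamLow * eucNorm (x - xbar) + δ + eucNorm e := by
    have := eucNorm_add_le (v + d) e
    have := eucNorm_add_le v d
    linarith
  have hE : eucNorm e ≤ (opnorm (g xbar) + μg * eucNorm (x - xbar)) * Δubar :=
    eucNorm_mulVec_le_of_opnorm_sub_le (hLip x xbar) hΔu
  have hnom := gwnorm_add_add_sub_gwnorm_le hP₁.posSemidef hP₂.posSemidef hmax₁ hmax₂ (e := e)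
    hlin hstab hopt
  have hpert := gwnorm_add_sub_gwnorm_add_le P₁ P₂ hΔP₁le hΔP₂le (v + d + e) (x - xbar)
  have key : gwnorm (P₂ + ΔP₂) (xplus - xbar) - gwnorm (P₁ + ΔP₁) (x - xbar) ≤
      3 * √lamUp * δ + √ΔPbar * δ + (√lamUp + √ΔPbar) * opnorm (g xbar) * Δubar -
        (θ - √ΔPbar - √ΔPbar * √lamUp / √lamLow - (√lamUp + √ΔPbar) * μg * Δubar) *
          eucNorm (x - xbar) := by
    rw [hsplit]
    linear_combination hpert + hnom + √ΔPbar * hplus + (√lamUp + √ΔPbar) * hE +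
      2 * mul_nonneg (Real.sqrt_nonneg lamUp) hδ
  refine ⟨key, fun hθ' hfar => ?_⟩
  rw [gt_iff_lt, div_lt_iff₀ (by linarith)] at hfar
  linarith

/-- core inequality of Theorem 3 (stability of the closed loop
with the trained NN in the loop). Under the linearization-error bound, the
stability constraint, and the one-step optimality consequence, the perturbed
Lyapunov decrement satisfies the stated bound; in particular, if
`θ > √(Δ̄P) + √(Δ̄P)·√(λ_up)/√(λ_low) + (√(λ_up) + √(Δ̄P))·μ_g·Δ̄u`, then the
perturbed Lyapunov function strictly decreases whenever `‖x − x̄‖ > ϑ`. -/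
theorem nn_in_the_loop_core_inequality {n p : ℕ}
    (x xbar : Fin n → ℝ) (u Δu : Fin p → ℝ)
    (Δubar : ℝ) (hΔu : eucNorm Δu ≤ Δubar)
    (f : (Fin n → ℝ) → (Fin n → ℝ)) (g : (Fin n → ℝ) → Matrix (Fin n) (Fin p) ℝ)
    (μg : ℝ) (hLip : ∀ a b : Fin n → ℝ, opnorm (g a - g b) ≤ μg * eucNorm (a - b))
    (A : Matrix (Fin n) (Fin n) ℝ) (δ θ : ℝ) (hδ : 0 ≤ δ) (hθ : 0 < θ)
    (xplus : Fin n → ℝ) (hxplus : xplus = f x + (g x).mulVec (u + Δu))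
    (P₁ P₂ ΔP₁ ΔP₂ : Matrix (Fin n) (Fin n) ℝ)
    (hP₁ : P₁.PosDef) (hP₂ : P₂.PosDef)
    (hΔP₁ : ΔP₁.IsHermitian) (hΔP₂ : ΔP₂.IsHermitian)
    (lamLow lamUp ΔPbar : ℝ) (hlamLow : 0 < lamLow) (hΔPbar : 0 ≤ ΔPbar)
    (hmin₁ : lamLow ≤ ⨅ i, hP₁.1.eigenvalues i)
    (hmin₂ : lamLow ≤ ⨅ i, hP₂.1.eigenvalues i)
    (hmax₁ : (⨆ i, hP₁.1.eigenvalues i) ≤ lamUp)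
    (hmax₂ : (⨆ i, hP₂.1.eigenvalues i) ≤ lamUp)
    (hΔP₁le : opnorm ΔP₁ ≤ ΔPbar) (hΔP₂le : opnorm ΔP₂ ≤ ΔPbar)
    (hlin : eucNorm (f x - A.mulVec x) ≤ δ)
    (hstab : gwnorm P₁ (A.mulVec x + (g x).mulVec u - xbar) - gwnorm P₁ (x - xbar) ≤
      -θ * eucNorm (x - xbar))
    (hopt : gwnorm P₂ (f x + (g x).mulVec u - xbar) ≤
      gwnorm P₁ (f x + (g x).mulVec u - xbar)) :
    gwnorm (P₂ + ΔP₂) (xplus - xbar) - gwnorm (P₁ + ΔP₁) (x - xbar) ≤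
      3 * Real.sqrt lamUp * δ + Real.sqrt ΔPbar * δ +
        (Real.sqrt lamUp + Real.sqrt ΔPbar) * opnorm (g xbar) * Δubar -
        (θ - Real.sqrt ΔPbar - Real.sqrt ΔPbar * Real.sqrt lamUp / Real.sqrt lamLow -
          (Real.sqrt lamUp + Real.sqrt ΔPbar) * μg * Δubar) * eucNorm (x - xbar) ∧
    (θ > Real.sqrt ΔPbar + Real.sqrt ΔPbar * Real.sqrt lamUp / Real.sqrt lamLow +
        (Real.sqrt lamUp + Real.sqrt ΔPbar) * μg * Δubar →
      eucNorm (x - xbar) >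
        (3 * Real.sqrt lamUp * δ + Real.sqrt ΔPbar * δ +
          (Real.sqrt lamUp + Real.sqrt ΔPbar) * opnorm (g xbar) * Δubar) /
        (θ - Real.sqrt ΔPbar - Real.sqrt ΔPbar * Real.sqrt lamUp / Real.sqrt lamLow -
          (Real.sqrt lamUp + Real.sqrt ΔPbar) * μg * Δubar) →
      gwnorm (P₂ + ΔP₂) (xplus - xbar) - gwnorm (P₁ + ΔP₁) (x - xbar) < 0) :=
  nn_in_the_loop_core_inequality_general x xbar u Δu Δubar hΔu f g μg hLip A δ θ hδ hθ xplus hxplus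
    P₁ P₂ ΔP₁ ΔP₂ hP₁ hP₂ lamLow lamUp ΔPbar hlamLow hmin₁ hmax₁ hmax₂ hΔP₁le hΔP₂le hlin hstab hopt
end
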